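/- arXiv:1304.5872 — 2 statements merged into one kernel-verified Lean document; each statement's English description precedes it below -/
import Mathlib

section
/- Let ε ∈ (0,1) with log(1/ε) ≥ 2, and let n, m be positive integers with m < n/log(1/ε) − 1. Define f(λ) = (n + λ/n)·log(1/ε) + 2n·log n − n·log(λ + n) for λ ∈ [0, nm]. Then the minimum of f on [0, nm] is attained at λ = nm, and f(nm) ≥ n·log(1/ε) + n·log(n/m) − O(n). -/
set_option maxHeartbeats 1000000 in
/-- with `f(λ) = (n + λ/n)·log₂(1/ε) + 2n·log₂ n − n·log₂(λ + n)` and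
`m < n/log₂(1/ε) − 1`, the minimum of `f` on `[0, nm]` is attained at `λ = nm`, and
`f(nm) ≥ n·log₂(1/ε) + n·log₂(n/m) − O(n)`. -/
theorem stmt7 :
    ∃ C : ℝ, ∀ (n m : ℕ) (ε : ℝ), 0 < ε → ε < 1 → 1 ≤ n → 1 ≤ m →
      2 ≤ Real.logb 2 (1 / ε) →
      (m : ℝ) < n / Real.logb 2 (1 / ε) - 1 →
      (∀ lam : ℝ, 0 ≤ lam → lam ≤ (n : ℝ) * m →
          ((n : ℝ) + ((n : ℝ) * m) / n) * Real.logb 2 (1 / ε) + 2 * n * Real.logb 2 n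
              - n * Real.logb 2 ((n : ℝ) * m + n)
            ≤ ((n : ℝ) + lam / n) * Real.logb 2 (1 / ε) + 2 * n * Real.logb 2 n
              - n * Real.logb 2 (lam + n)) ∧
        ((n : ℝ) + ((n : ℝ) * m) / n) * Real.logb 2 (1 / ε) + 2 * n * Real.logb 2 n
            - n * Real.logb 2 ((n : ℝ) * m + n)
          ≥ n * Real.logb 2 (1 / ε) + n * Real.logb 2 ((n : ℝ) / m) - C * n := by
  refine ⟨1, fun n m ε hε hε1 hn hm hL hmlt => ?_⟩
  set L := Real.logb 2 (1 / ε) with hLdef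
  have hn0 : (0 : ℝ) < n := by exact_mod_cast hn
  have hm0 : (0 : ℝ) < m := by exact_mod_cast hm
  have hm1 : (1 : ℝ) ≤ m := by exact_mod_cast hm
  have hL0 : (0 : ℝ) < L := lt_of_lt_of_le (by norm_num) hL
  have hlog2 : (0 : ℝ) < Real.log 2 := Real.log_pos one_lt_two
  have hlog2' : Real.log 2 < 1 := by
    have := Real.log_two_lt_d9; linarith
  have hne : (n : ℝ) ≠ 0 := ne_of_gt hn0
  have hkey : ((m : ℝ) + 1) * L < n := by
    have h1 : ((m : ℝ) + 1) < n / L := by linarith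
    have := (lt_div_iff₀ hL0).mp h1
    linarith
  constructor
  · intro lam hlam0 hlam
    set a : ℝ := lam + n with ha_def
    set b : ℝ := (n : ℝ) * m + n with hb_def
    have ha : 0 < a := by positivity
    have hab : a ≤ b := by simp only [ha_def, hb_def]; linarith
    have hb : 0 < b := lt_of_lt_of_le ha hab
    have h1 : Real.log (a / b) ≤ a / b - 1 := Real.log_le_sub_one_of_pos (div_pos ha hb)
    rw [Real.log_div (ne_of_gt ha) (ne_of_gt hb)] at h1
    -- log a - log b ≤ a/b - 1
    have h1' : b - a ≤ b * (Real.log b - Real.log a) := by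
      have := mul_le_mul_of_nonneg_left h1 (le_of_lt hb)
      have hba : b * (a / b) = a := by field_simp
      nlinarith
    have hbLl : b * (L * Real.log 2) ≤ (n : ℝ) ^ 2 := by
      have hb_eq : b = n * ((m : ℝ) + 1) := by rw [hb_def]; ring
      have h2 : ((m : ℝ) + 1) * (L * Real.log 2) ≤ (n : ℝ) := by
        nlinarith
      calc b * (L * Real.log 2) = n * (((m : ℝ) + 1) * (L * Real.log 2)) := by
            rw [hb_eq]; ring
        _ ≤ n * n := by nlinarith
        _ = (n : ℝ) ^ 2 := by ring
    have G : (b - a) * L * Real.log 2 ≤ (n : ℝ) ^ 2 * (Real.log b - Real.log a) := by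
      have hba0 : 0 ≤ b - a := by linarith
      have hA : (b - a) * (b * (L * Real.log 2)) ≤ (b - a) * (n : ℝ) ^ 2 :=
        mul_le_mul_of_nonneg_left hbLl hba0
      have hB : (b - a) * (n : ℝ) ^ 2 ≤ (b * (Real.log b - Real.log a)) * (n : ℝ) ^ 2 := by
        nlinarith [sq_nonneg (n : ℝ)]
      have hC : (b - a) * (b * (L * Real.log 2)) = b * ((b - a) * L * Real.log 2) := by ring
      have hD : (b * (Real.log b - Real.log a)) * (n : ℝ) ^ 2
          = b * ((n : ℝ) ^ 2 * (Real.log b - Real.log a)) := by ring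
      have := le_trans hA hB
      rw [hC, hD] at this
      exact le_of_mul_le_mul_left this hb
    have key : ((n : ℝ) * m) / n * L - lam / n * L
        ≤ n * Real.logb 2 b - n * Real.logb 2 a := by
      have hlhs : ((n : ℝ) * m) / n * L - lam / n * L = ((b - a) * L) / n := by
        field_simp [hb_def, ha_def]; ring
      have hrhs : (n : ℝ) * Real.logb 2 b - n * Real.logb 2 a
          = ((n : ℝ) * (Real.log b - Real.log a)) / Real.log 2 := by
        simp only [Real.logb]; ring
      rw [hlhs, hrhs, div_le_div_iff₀ hn0 hlog2]
      ring_nf at G ⊢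
      linarith [G]
    ring_nf at key ⊢
    linarith [key]
  · -- lower bound with C = 1
    have hbm : (n : ℝ) * m + n = n * ((m : ℝ) + 1) := by ring
    have e1 : Real.logb 2 ((n : ℝ) * m + n)
        = Real.logb 2 n + Real.logb 2 ((m : ℝ) + 1) := by
      rw [hbm, Real.logb_mul hne (by positivity)]
    have e2 : Real.logb 2 ((n : ℝ) / m) = Real.logb 2 n - Real.logb 2 m := by
      rw [Real.logb_div hne (ne_of_gt hm0)]
    have e3 : ((n : ℝ) * m) / n = m := by field_simp
    have hmono : Real.logb 2 ((m : ℝ) + 1) - Real.logb 2 m ≤ 1 := by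
      have h4 : Real.logb 2 ((m : ℝ) + 1) ≤ Real.logb 2 (2 * m) := by
        exact Real.logb_le_logb_of_le one_lt_two (by linarith) (by linarith)
      have h5 : Real.logb 2 (2 * (m : ℝ)) = 1 + Real.logb 2 m := by
        rw [Real.logb_mul (by norm_num) (ne_of_gt hm0), Real.logb_self_eq_one] <;> norm_num
      linarith
    have hmL : 0 ≤ (m : ℝ) * L := by positivity
    have H := mul_le_mul_of_nonneg_left hmono (le_of_lt hn0)
    rw [ge_iff_le, e1, e2, e3]
    ring_nf at H hmL ⊢
    linarith [H, hmL]
end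

section
/- Let U' be a disjoint union of w copies U_1, ..., U_w of a universe U, and let W be the set of sequences over U' of length 2n' (where n' = (n−1)w) in which every consecutive chunk of w elements contains exactly one element from each world U_i, and all elements are distinct. Then |W| = C(u, 2n'/w)^w · ((2n'/w)!)^w · (w!)^{2n'/w}, where u = |U|. -/
/-- the number of sequences over `U' = (Fin w) × U` of length
`2n' = 2(n−1)·w`, organized into `2n'/w = 2(n−1)` consecutive chunks of `w`
elements each, such that all elements are distinct and every chunk contains
exactly one element from each world, is
`C(u, 2n'/w)^w · ((2n'/w)!)^w · (w!)^{2n'/w}`. -/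
theorem stmt10 (n w u : ℕ) (hn : 1 ≤ n) (hw : 1 ≤ w)
    (U : Type*) [Fintype U] (hu : Fintype.card U = u) :
    Nat.card {s : Fin (2 * (n - 1)) → Fin w → Fin w × U //
        Function.Injective (fun p : Fin (2 * (n - 1)) × Fin w => s p.1 p.2) ∧
        ∀ c, Function.Bijective (fun j => (s c j).1)} =
      (u.choose (2 * (n - 1))) ^ w * ((2 * (n - 1)).factorial) ^ w
        * (w.factorial) ^ (2 * (n - 1)) := by
  classical
  set m := 2 * (n - 1) with hm
  have e : {s : Fin m → Fin w → Fin w × U //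
        Function.Injective (fun p : Fin m × Fin w => s p.1 p.2) ∧
        ∀ c, Function.Bijective (fun j => (s c j).1)} ≃
      ((Fin m → Equiv.Perm (Fin w)) × (Fin w → (Fin m ↪ U))) :=
    { toFun := fun ⟨s, hinj, hbij⟩ =>
        (fun c => Equiv.ofBijective _ (hbij c),
         fun i => ⟨fun c => (s c ((Equiv.ofBijective _ (hbij c)).symm i)).2, by
            intro c c' h
            have h1 : (s c ((Equiv.ofBijective _ (hbij c)).symm i)).1
                = (s c' ((Equiv.ofBijective _ (hbij c')).symm i)).1 := by
              show (Equiv.ofBijective _ (hbij c)) ((Equiv.ofBijective _ (hbij c)).symm i)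
                  = (Equiv.ofBijective _ (hbij c')) ((Equiv.ofBijective _ (hbij c')).symm i)
              simp
            have := hinj (a₁ := (c, (Equiv.ofBijective _ (hbij c)).symm i))
              (a₂ := (c', (Equiv.ofBijective _ (hbij c')).symm i)) (Prod.ext h1 h)
            exact congrArg Prod.fst this⟩)
      invFun := fun ⟨σ, g⟩ =>
        ⟨fun c j => (σ c j, g (σ c j) c), by
          constructor
          · rintro ⟨c, j⟩ ⟨c', j'⟩ h
            simp only [Prod.mk.injEq] at h
            obtain ⟨h1, h2⟩ := h
            have hc : c = c' := (g (σ c j)).injective (by rw [h2]; rw [h1])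
            subst hc
            have hj : j = j' := (σ c).injective h1
            simp [hj]
          · intro c
            exact (σ c).bijective⟩
      left_inv := fun ⟨s, hinj, hbij⟩ => by
        apply Subtype.ext
        funext c j
        apply Prod.ext
        · rfl
        · show (s c ((Equiv.ofBijective _ (hbij c)).symm
              ((Equiv.ofBijective _ (hbij c)) j))).2 = (s c j).2
          rw [Equiv.symm_apply_apply]
      right_inv := fun ⟨σ, g⟩ => by
        have hσ : ∀ c, Equiv.ofBijective (fun j => ((σ c j, g (σ c j) c) : Fin w × U).1)
            (σ c).bijective = σ c := fun c => Equiv.ext fun j => rfl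
        apply Prod.ext
        · funext c
          exact hσ c
        · funext i
          apply DFunLike.ext
          intro c
          show g (σ c ((Equiv.ofBijective _ _).symm i)) c = g i c
          rw [show (σ c ((Equiv.ofBijective (fun j => ((σ c j, g (σ c j) c) : Fin w × U).1)
              (σ c).bijective).symm i)) = i by
            conv_lhs => rw [← hσ c]
            exact Equiv.apply_symm_apply _ i]
      }
  rw [Nat.card_congr e]
  simp only [Nat.card_eq_fintype_card, Fintype.card_prod, Fintype.card_fun,
    Fintype.card_perm, Fintype.card_embedding_eq, Fintype.card_fin, hu,
    Nat.descFactorial_eq_factorial_mul_choose, mul_pow]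
  ring
end
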